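/- arXiv:0910.1893 — 2 statements merged into one kernel-verified Lean document; each statement's English description precedes it below -/
import Mathlib

section
/- Let u be a classical solution of the non-local logistic equation with initial data g. Assume that the map t ↦ λ(t) is continuous on [0,∞); that for each t ≥ 0 the function m(t) := ∫_D u(t,x)² dx is finite and m is differentiable with m'(t) = 2∫_D u(t,x)·∂_t u(t,x) dx (differentiation under the integral sign); and that for each t ≥ 0 one has ∫_D u(t,x)·Δu(t,x) dx = −∫_D |∇u(t,x)|² dx (integration by parts, valid because u(t,·) vanishes on ∂D). If ∫_D g(x)² dx = 1, then ∫_D u(t,x)² dx = 1 for every t ≥ 0; that is, the non-local term λ(t) exactly preserves the L² mass of the solution. -/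
/-!
Multiplying the equation by `u` and integrating over `D`, integration by parts turns `∫ u Δu`
into `-∫ |∇u|²`, which cancels the gradient part of `λ(t)`, and the logistic term cancels the
rest of `λ(t)`: the mass `m(t) = ∫_D u(t)²` satisfies the linear equation
`m' = 2λ(t) (m - 1)`. As `m(0) = 1` and `λ` is continuous, Grönwall's inequality gives `m ≡ 1`.
-/

open MeasureTheory Real Set

noncomputable section

/-- The Laplacian of `f`, as the sum of the pure second derivatives in the coordinate
directions of `EuclideanSpace ℝ (Fin n)`. -/
def lap {n : ℕ} (f : EuclideanSpace ℝ (Fin n) → ℝ) (x : EuclideanSpace ℝ (Fin n)) : ℝ :=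
  ∑ i : Fin n, fderiv ℝ (fun y => fderiv ℝ f y (EuclideanSpace.single i 1)) x
    (EuclideanSpace.single i 1)

/-- The non-local term `λ(t) = ∫_D (|∇u|² + a (u^{p+1} − u²)) dx`. -/
def lam {n : ℕ} (D : Set (EuclideanSpace ℝ (Fin n))) (a : EuclideanSpace ℝ (Fin n) → ℝ)
    (p : ℝ) (u : ℝ → EuclideanSpace ℝ (Fin n) → ℝ) (t : ℝ) : ℝ :=
  ∫ x in D, (‖gradient (u t) x‖ ^ 2 + a x * ((u t x) ^ (p + 1) - (u t x) ^ 2))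

/-- A classical solution of the non-local logistic equation
`∂ₜu = Δu + λ(t)u + a(u − uᵖ)` on `D` with initial data `g`. -/
structure IsClassicalSolution {n : ℕ} (D : Set (EuclideanSpace ℝ (Fin n)))
    (a : EuclideanSpace ℝ (Fin n) → ℝ) (p : ℝ)
    (g : EuclideanSpace ℝ (Fin n) → ℝ) (u : ℝ → EuclideanSpace ℝ (Fin n) → ℝ) : Prop where
  init : ∀ x ∈ D, u 0 x = g x
  nonneg : ∀ t, 0 ≤ t → ∀ x ∈ D, 0 ≤ u t x
  space_reg : ∀ t, 0 ≤ t → ContDiffOn ℝ 2 (u t) D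
  time_diff : ∀ x ∈ D, Differentiable ℝ fun s => u s x
  lam_integrable : ∀ t, 0 ≤ t → IntegrableOn
    (fun x => ‖gradient (u t) x‖ ^ 2 + a x * ((u t x) ^ (p + 1) - (u t x) ^ 2)) D volume
  pde : ∀ t, 0 ≤ t → ∀ x ∈ D,
    deriv (fun s => u s x) t =
      lap (u t) x + lam D a p u t * u t x + a x * (u t x - (u t x) ^ p)

section ODE

variable {E : Type*} [NormedAddCommGroup E] [NormedSpace ℝ E]

theorem eq_zero_of_hasDerivAt_smul_self {f : ℝ → E} {c : ℝ → ℝ} (hc : ContinuousOn c (Ici 0))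
    (hf : ∀ t, 0 ≤ t → HasDerivAt f (c t • f t) t) (h0 : f 0 = 0) {t : ℝ} (ht : 0 ≤ t) :
    f t = 0 := by
  obtain ⟨K, hK⟩ := (isCompact_Icc (a := 0) (b := t)).exists_bound_of_continuousOn
    (hc.mono Icc_subset_Ici_self)
  refine eq_zero_of_abs_deriv_le_mul_abs_self_of_eq_zero_right (K := K)
    (fun s hs => (hf s hs.1).continuousAt.continuousWithinAt)
    (fun s hs => (hf s hs.1).hasDerivWithinAt) h0 (fun s hs => ?_) t ⟨ht, le_rfl⟩
  rw [norm_smul]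
  exact mul_le_mul_of_nonneg_right (hK s (Ico_subset_Icc_self hs)) (norm_nonneg _)

end ODE

theorem ContDiffOn.continuousOn_gradient {F : Type*} [NormedAddCommGroup F]
    [InnerProductSpace ℝ F] [CompleteSpace F] {f : F → ℝ} {s : Set F}
    (hf : ContDiffOn ℝ 1 f s) (hs : IsOpen s) : ContinuousOn (gradient f) s :=
  (InnerProductSpace.toDual ℝ F).symm.continuous.comp_continuousOn
    (hf.continuousOn_fderiv_of_isOpen hs le_rfl)

section Laplacian

variable {n : ℕ} {D : Set (EuclideanSpace ℝ (Fin n))} {f : EuclideanSpace ℝ (Fin n) → ℝ}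

theorem lap_eq_zero_of_eqOn_gradient_zero (hD : IsOpen D) (hf : EqOn (gradient f) 0 D)
    {x : EuclideanSpace ℝ (Fin n)} (hx : x ∈ D) : lap f x = 0 := by
  refine Finset.sum_eq_zero fun i _ => ?_
  have hloc : (fun y => fderiv ℝ f y (EuclideanSpace.single i 1)) =ᶠ[nhds x] fun _ => 0 := by
    filter_upwards [hD.mem_nhds hx] with y hy
    rw [← inner_gradient_left, hf hy, Pi.zero_apply, inner_zero_left]
  rw [hloc.fderiv_eq, fderiv_const_apply, zero_apply]

/-- The integration-by-parts identity forces `f Δf` to be integrable: otherwise its integral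
is the junk value `0`, so `∇f = 0` on `D`, hence `Δf = 0` on `D`. -/
theorem integrableOn_mul_lap_of_integral_eq (hD : IsOpen D)
    (hgrad : ContinuousOn (gradient f) D)
    (hgrad_int : IntegrableOn (fun x => ‖gradient f x‖ ^ 2) D)
    (hibp : ∫ x in D, f x * lap f x = -∫ x in D, ‖gradient f x‖ ^ 2) :
    IntegrableOn (fun x => f x * lap f x) D := by
  by_contra hnot
  have hzero : ∫ x in D, ‖gradient f x‖ ^ 2 = 0 := by
    linarith [integral_undef hnot]
  have hae : (fun x => ‖gradient f x‖ ^ 2) =ᵐ[volume.restrict D] 0 :=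
    (integral_eq_zero_iff_of_nonneg (fun _ => by positivity) hgrad_int).mp hzero
  have hsq : EqOn (fun x => ‖gradient f x‖ ^ 2) 0 D :=
    Measure.eqOn_open_of_ae_eq hae hD (hgrad.norm.pow 2) continuousOn_const
  have hgrad_zero : EqOn (gradient f) 0 D := fun x hx => by
    simpa using hsq hx
  refine hnot (integrableOn_zero.congr_fun (fun x hx => ?_) hD.measurableSet)
  rw [lap_eq_zero_of_eqOn_gradient_zero hD hgrad_zero hx, mul_zero]

end Laplacian

/-- The integrand of `lam`: `lam D a p u t = ∫ x in D, lamDensity a p (u t) x`. -/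
def lamDensity {n : ℕ} (a : EuclideanSpace ℝ (Fin n) → ℝ) (p : ℝ)
    (f : EuclideanSpace ℝ (Fin n) → ℝ) (x : EuclideanSpace ℝ (Fin n)) : ℝ :=
  ‖gradient f x‖ ^ 2 + a x * (f x ^ (p + 1) - f x ^ 2)

section Density

variable {n : ℕ} {D : Set (EuclideanSpace ℝ (Fin n))} {a f : EuclideanSpace ℝ (Fin n) → ℝ}
  {p M : ℝ}

/-- Since `a f^{p+1} ≥ 0` and `a f² ≤ M f²`, `‖∇f‖²` is dominated by `lamDensity a p f + M f²`. -/
theorem integrableOn_sq_norm_gradient (hD : MeasurableSet D)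
    (ha : ∀ x ∈ D, 0 ≤ a x ∧ a x ≤ M) (hf : ∀ x ∈ D, 0 ≤ f x)
    (hgrad : ContinuousOn (gradient f) D) (hdens : IntegrableOn (lamDensity a p f) D)
    (hf_sq : IntegrableOn (fun x => f x ^ 2) D) :
    IntegrableOn (fun x => ‖gradient f x‖ ^ 2) D := by
  refine Integrable.mono' (hdens.add (hf_sq.const_mul M))
    ((hgrad.norm.pow 2).aestronglyMeasurable hD) ?_
  rw [ae_restrict_iff' hD]
  refine Filter.Eventually.of_forall fun x hx => ?_
  obtain ⟨ha0, haM⟩ := ha x hx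
  have hpow : 0 ≤ a x * f x ^ (p + 1) := mul_nonneg ha0 (rpow_nonneg (hf x hx) _)
  have hsq : a x * f x ^ 2 ≤ M * f x ^ 2 := mul_le_mul_of_nonneg_right haM (sq_nonneg _)
  rw [norm_of_nonneg (by positivity), Pi.add_apply, lamDensity]
  linarith

theorem setIntegral_mul_eq_lam_mul_sub_one (hD : IsOpen D)
    (ha : ∀ x ∈ D, 0 ≤ a x ∧ a x ≤ M) (hp : p + 1 ≠ 0) (hf : ∀ x ∈ D, 0 ≤ f x)
    (hgrad : ContinuousOn (gradient f) D) (hdens : IntegrableOn (lamDensity a p f) D)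
    (hf_sq : IntegrableOn (fun x => f x ^ 2) D)
    (hibp : ∫ x in D, f x * lap f x = -∫ x in D, ‖gradient f x‖ ^ 2)
    {v : EuclideanSpace ℝ (Fin n) → ℝ}
    (hv : ∀ x ∈ D, v x = lap f x + (∫ y in D, lamDensity a p f y) * f x + a x * (f x - f x ^ p)) :
    ∫ x in D, f x * v x =
      (∫ x in D, lamDensity a p f x) * ((∫ x in D, f x ^ 2) - 1) := by
  set lamf := ∫ x in D, lamDensity a p f x
  have hgrad_int := integrableOn_sq_norm_gradient hD.measurableSet ha hf hgrad hdens hf_sq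
  have hlap_int := integrableOn_mul_lap_of_integral_eq hD hgrad hgrad_int hibp
  have hlog_int : IntegrableOn (fun x => a x * (f x ^ (p + 1) - f x ^ 2)) D :=
    (hdens.sub hgrad_int).congr_fun (fun x _ => by simp [lamDensity]) hD.measurableSet
  have hpointwise : EqOn (fun x => f x * v x)
      (fun x => (f x * lap f x + lamf * f x ^ 2) - a x * (f x ^ (p + 1) - f x ^ 2)) D := by
    intro x hx
    dsimp only
    rw [hv x hx, rpow_add_one' (hf x hx) hp]
    ring
  have hlam : lamf = -(∫ x in D, f x * lap f x) + ∫ x in D, a x * (f x ^ (p + 1) - f x ^ 2) := by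
    rw [hibp, neg_neg, ← integral_add hgrad_int hlog_int]
    rfl
  have hsum_int : IntegrableOn (fun x => f x * lap f x + lamf * f x ^ 2) D :=
    hlap_int.add (hf_sq.const_mul lamf)
  rw [setIntegral_congr_fun hD.measurableSet hpointwise, integral_sub hsum_int hlog_int,
    integral_add hlap_int (hf_sq.const_mul lamf), integral_const_mul]
  linarith

end Density

theorem mass_preservation_general {n : ℕ}
    (D : Set (EuclideanSpace ℝ (Fin n))) (hD_open : IsOpen D)
    (M p : ℝ) (hp : 1 < p)
    (a g : EuclideanSpace ℝ (Fin n) → ℝ)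
    (ha : ∀ x ∈ D, 0 ≤ a x ∧ a x ≤ M)
    (u : ℝ → EuclideanSpace ℝ (Fin n) → ℝ)
    (hu : IsClassicalSolution D a p g u)
    -- continuity of `t ↦ λ(t)` on `[0,∞)`
    (hlam_cont : ContinuousOn (lam D a p u) (Set.Ici 0))
    -- `m(t) = ∫_D u(t)²` is finite
    (hm_int : ∀ t, 0 ≤ t → IntegrableOn (fun x => (u t x) ^ 2) D volume)
    -- differentiation under the integral sign: `m'(t) = 2 ∫_D u ∂ₜu`
    (hm_deriv : ∀ t, 0 ≤ t → HasDerivAt (fun s => ∫ x in D, (u s x) ^ 2)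
      (2 * ∫ x in D, u t x * deriv (fun s => u s x) t) t)
    -- integration by parts: `∫_D u Δu = −∫_D |∇u|²`
    (hibp : ∀ t, 0 ≤ t →
      (∫ x in D, u t x * lap (u t) x) = -∫ x in D, ‖gradient (u t) x‖ ^ 2)
    (hg : ∫ x in D, (g x) ^ 2 = 1) :
    ∀ t, 0 ≤ t → ∫ x in D, (u t x) ^ 2 = 1 := by
  have hmass_deriv : ∀ t, 0 ≤ t → HasDerivAt (fun s => (∫ x in D, u s x ^ 2) - 1)
      (2 * lam D a p u t * ((∫ x in D, u t x ^ 2) - 1)) t := fun t ht => by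
    have hgrad := ((hu.space_reg t ht).of_le one_le_two).continuousOn_gradient hD_open
    have hkey := setIntegral_mul_eq_lam_mul_sub_one hD_open ha (by linarith) (hu.nonneg t ht)
      hgrad (hu.lam_integrable t ht) (hm_int t ht) (hibp t ht) (hu.pde t ht)
    rw [mul_assoc]
    exact hkey ▸ (hm_deriv t ht).sub_const 1
  have hmass_zero : (∫ x in D, u 0 x ^ 2) - 1 = 0 := by
    rw [setIntegral_congr_fun hD_open.measurableSet fun x hx => by rw [hu.init x hx], hg, sub_self]
  intro t ht
  exact sub_eq_zero.mp <|
    eq_zero_of_hasDerivAt_smul_self (continuousOn_const.mul hlam_cont) hmass_deriv hmass_zero ht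

/-- The non-local term `λ(t)` exactly preserves the `L²` mass:
if `∫_D g² = 1`, then `∫_D u(t)² = 1` for all `t ≥ 0`. -/
theorem mass_preservation {n : ℕ} (hn : 1 ≤ n)
    (D : Set (EuclideanSpace ℝ (Fin n))) (hD_open : IsOpen D)
    (hD_bdd : Bornology.IsBounded D)
    (M p : ℝ) (hM : 0 < M) (hp : 1 < p)
    (a g : EuclideanSpace ℝ (Fin n) → ℝ)
    (ha : ∀ x ∈ D, 0 ≤ a x ∧ a x ≤ M) (ha' : ∀ x ∈ D, ‖gradient a x‖ ≤ M)
    (u : ℝ → EuclideanSpace ℝ (Fin n) → ℝ)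
    (hu : IsClassicalSolution D a p g u)
    -- continuity of `t ↦ λ(t)` on `[0,∞)`
    (hlam_cont : ContinuousOn (lam D a p u) (Set.Ici 0))
    -- `m(t) = ∫_D u(t)²` is finite
    (hm_int : ∀ t, 0 ≤ t → IntegrableOn (fun x => (u t x) ^ 2) D volume)
    -- differentiation under the integral sign: `m'(t) = 2 ∫_D u ∂ₜu`
    (hm_deriv : ∀ t, 0 ≤ t → HasDerivAt (fun s => ∫ x in D, (u s x) ^ 2)
      (2 * ∫ x in D, u t x * deriv (fun s => u s x) t) t)
    -- integration by parts: `∫_D u Δu = −∫_D |∇u|²`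
    (hibp : ∀ t, 0 ≤ t →
      (∫ x in D, u t x * lap (u t) x) = -∫ x in D, ‖gradient (u t) x‖ ^ 2)
    (hg : ∫ x in D, (g x) ^ 2 = 1) :
    ∀ t, 0 ≤ t → ∫ x in D, (u t x) ^ 2 = 1 :=
  mass_preservation_general D hD_open M p hp a g ha u hu hlam_cont hm_int hm_deriv hibp hg
end
end

section
/- (Uniform bound for the iteration scheme, establishing estimate (2.9) of the paper.) Let A ≥ 0 and c > 0 be real numbers, and let (y_k)_{k∈ℕ} be a sequence of continuous functions y_k : [0,∞) → [0,∞) such that y_0(t) ≤ A for all t ≥ 0, and for every k ∈ ℕ and every t ≥ 0: y_{k+1}(t) ≤ A·exp(c·∫_0^t (y_k(s) + c) ds). Then, setting c₄ = e·A and δ = 1/(c·(e·A + c)), one has y_k(t) ≤ c₄ for every k ∈ ℕ and every t ∈ [0, δ]. -/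
open MeasureTheory Real Set

/-! Induction on `k`: if `y k ≤ e A` on `[0, δ]`, the exponent `c ∫₀ᵗ (y k + c)` is at most
`c (e A + c) δ = 1`, so `y (k + 1) ≤ A e` there. -/

theorem intervalIntegral_le_mul_of_le_const {f : ℝ → ℝ} {a b M : ℝ} (hab : a ≤ b)
    (hf : IntervalIntegrable f volume a b) (hfM : ∀ x ∈ Icc a b, f x ≤ M) :
    ∫ x in a..b, f x ≤ (b - a) * M :=
  (intervalIntegral.integral_mono_on hab hf intervalIntegrable_const hfM).trans_eq
    (intervalIntegral.integral_const M)

theorem mul_exp_integral_add_const_le {f : ℝ → ℝ} {A c M t : ℝ} (hA : 0 ≤ A) (hc : 0 ≤ c)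
    (ht : 0 ≤ t) (hf : ContinuousOn f (Icc 0 t)) (hfM : ∀ s ∈ Icc 0 t, f s ≤ M) :
    A * exp (c * ∫ s in (0:ℝ)..t, (f s + c)) ≤ A * exp (c * (t * (M + c))) := by
  have hint : IntervalIntegrable (fun s => f s + c) volume 0 t :=
    (hf.add continuousOn_const).intervalIntegrable_of_Icc ht
  have hbound := intervalIntegral_le_mul_of_le_const ht hint fun s hs => add_le_add_left (hfM s hs) c
  rw [sub_zero] at hbound
  gcongr

theorem iteration_uniform_bound_general (A c : ℝ) (hA : 0 ≤ A) (hc : 0 < c)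
    (y : ℕ → ℝ → ℝ)
    (hy_cont : ∀ k, ContinuousOn (y k) (Set.Ici 0))
    (hy0 : ∀ t, 0 ≤ t → y 0 t ≤ A)
    (hrec : ∀ k, ∀ t, 0 ≤ t →
      y (k + 1) t ≤ A * Real.exp (c * ∫ s in (0:ℝ)..t, (y k s + c))) :
    ∀ k, ∀ t ∈ Set.Icc (0:ℝ) (1 / (c * (Real.exp 1 * A + c))),
      y k t ≤ Real.exp 1 * A := by
  intro k
  induction k with
  | zero => exact fun t ht => (hy0 t ht.1).trans (le_mul_of_one_le_left hA (one_le_exp zero_le_one))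
  | succ k ih =>
    rintro t ⟨ht0, htδ⟩
    have hexponent : c * (t * (exp 1 * A + c)) ≤ 1 := by
      have := (le_div_iff₀ (by positivity : 0 < c * (exp 1 * A + c))).mp htδ
      linarith
    calc y (k + 1) t ≤ A * exp (c * ∫ s in (0:ℝ)..t, (y k s + c)) := hrec k t ht0
      _ ≤ A * exp (c * (t * (exp 1 * A + c))) :=
        mul_exp_integral_add_const_le hA hc.le ht0 ((hy_cont k).mono Icc_subset_Ici_self)
          fun s hs => ih s ⟨hs.1, hs.2.trans htδ⟩
      _ ≤ A * exp 1 := by gcongr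
      _ = exp 1 * A := mul_comm _ _

/-- Uniform bound for the iteration scheme, establishing
estimate (2.9) of the paper. -/
theorem iteration_uniform_bound (A c : ℝ) (hA : 0 ≤ A) (hc : 0 < c)
    (y : ℕ → ℝ → ℝ)
    (hy_cont : ∀ k, ContinuousOn (y k) (Set.Ici 0))
    (hy_nonneg : ∀ k, ∀ t, 0 ≤ t → 0 ≤ y k t)
    (hy0 : ∀ t, 0 ≤ t → y 0 t ≤ A)
    (hrec : ∀ k, ∀ t, 0 ≤ t →
      y (k + 1) t ≤ A * Real.exp (c * ∫ s in (0:ℝ)..t, (y k s + c))) :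
    ∀ k, ∀ t ∈ Set.Icc (0:ℝ) (1 / (c * (Real.exp 1 * A + c))),
      y k t ≤ Real.exp 1 * A :=
  iteration_uniform_bound_general A c hA hc y hy_cont hy0 hrec
end
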